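/- Let X, Y be Polish spaces with Borel probability measures μ, ν and c : X × Y → [0,∞] Borel measurable. Suppose π₀ ∈ Π(μ,ν) has I_c[π₀] < ∞ and is strongly c-monotone, i.e. there are Borel functions φ : X → [-∞,∞), ψ : Y → [-∞,∞) with φ(x) + ψ(y) ≤ c(x,y) everywhere and φ(x) + ψ(y) = c(x,y) for π₀-a.e. (x,y). Then π₀ is optimal: I_c[π₀] ≤ I_c[π₁] for every π₁ ∈ Π(μ,ν). -/

import Mathlib

open MeasureTheory Set
open scoped ENNReal

noncomputable section

def IsCoupling {X Y : Type*} [MeasurableSpace X] [MeasurableSpace Y]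
    (μ : Measure X) (ν : Measure Y) (π : Measure (X × Y)) : Prop :=
  π.map Prod.fst = μ ∧ π.map Prod.snd = ν

def CMonotoneSet {X Y : Type*} (c : X × Y → ℝ≥0∞) (Γ : Set (X × Y)) : Prop :=
  ∀ (n : ℕ) (f : Fin (n + 1) → X × Y), (∀ i, f i ∈ Γ) →
    ∑ i, c (f i) ≤ ∑ i, c ((f i).1, (f (i + 1)).2)

/-!
Truncating the potentials to `[-n, n]` makes them integrable, and then
`∫ φₙ dμ + ∫ ψₙ dν` is the integral of `φₙ(x) + ψₙ(y)` against every coupling. Against `π₁`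
it is at most `∫ c dπ₁`, because `φₙ + ψₙ ≤ max (φ + ψ) 0 ≤ c`. Against `π₀`, where
`φ + ψ = c` almost everywhere, `φₙ + ψₙ` is nonnegative and converges to `c`, so Fatou's lemma
bounds `∫ c dπ₀` by the limit inferior of these common values.
-/

open Filter Topology

namespace EReal

def truncate (n : ℕ) (a : EReal) : ℝ := (max (min a (n : ℝ)) (-n : ℝ)).toReal

variable {n : ℕ} {a b : EReal}

theorem coe_neg_natCast_le : ((-n : ℝ) : EReal) ≤ (n : ℝ) :=
  EReal.coe_le_coe_iff.2 (neg_le_self n.cast_nonneg)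

theorem coe_truncate : (truncate n a : EReal) = max (min a (n : ℝ)) (-n : ℝ) :=
  coe_toReal (ne_top_of_le_ne_top (coe_ne_top n) (max_le (min_le_right _ _) coe_neg_natCast_le))
    (ne_bot_of_le_ne_bot (coe_ne_bot _) (le_max_right _ _))

theorem truncate_le : truncate n a ≤ n := by
  have : (truncate n a : EReal) ≤ (n : ℝ) := coe_truncate.trans_le
    (max_le (min_le_right _ _) coe_neg_natCast_le)
  exact_mod_cast this

theorem neg_le_truncate : -(n : ℝ) ≤ truncate n a := by
  have : ((-n : ℝ) : EReal) ≤ truncate n a := coe_truncate.symm ▸ le_max_right _ _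
  exact_mod_cast this

theorem abs_truncate_le : |truncate n a| ≤ n := abs_le.2 ⟨neg_le_truncate, truncate_le⟩

theorem truncate_of_le_neg (h : a ≤ (-n : ℝ)) : truncate n a = -n := by
  have : (truncate n a : EReal) = (-n : ℝ) := by
    rw [coe_truncate, min_eq_left (h.trans coe_neg_natCast_le), max_eq_right h]
  exact_mod_cast this

theorem truncate_of_ge (h : (n : ℝ) ≤ a) : truncate n a = n := by
  have : (truncate n a : EReal) = (n : ℝ) := by
    rw [coe_truncate, min_eq_right h, max_eq_left coe_neg_natCast_le]
  exact_mod_cast this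

theorem coe_truncate_le (h : (-n : ℝ) ≤ a) : (truncate n a : EReal) ≤ a := by
  rw [coe_truncate]
  exact max_le (min_le_left _ _) h

theorem le_coe_truncate (h : a ≤ (n : ℝ)) : a ≤ truncate n a := by
  rw [coe_truncate]
  exact le_max_of_le_left (le_min le_rfl h)

theorem coe_truncate_add_le : ((truncate n a + truncate n b : ℝ) : EReal) ≤ max (a + b) 0 := by
  rcases le_or_gt ((-n : ℝ) : EReal) a with ha | ha
  · rcases le_or_gt ((-n : ℝ) : EReal) b with hb | hb
    · rw [coe_add]
      exact le_max_of_le_left (add_le_add (coe_truncate_le ha) (coe_truncate_le hb))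
    · refine le_max_of_le_right ?_
      rw [truncate_of_le_neg hb.le]
      exact_mod_cast (by linarith [truncate_le (n := n) (a := a)] : truncate n a + -n ≤ 0)
  · refine le_max_of_le_right ?_
    rw [truncate_of_le_neg ha.le]
    exact_mod_cast (by linarith [truncate_le (n := n) (a := b)] : -n + truncate n b ≤ 0)

theorem truncate_add_nonneg (h : 0 ≤ a + b) : 0 ≤ truncate n a + truncate n b := by
  rcases le_or_gt ((n : ℝ) : EReal) a with ha | ha
  · rw [truncate_of_ge ha]; linarith [neg_le_truncate (n := n) (a := b)]
  rcases le_or_gt ((n : ℝ) : EReal) b with hb | hb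
  · rw [truncate_of_ge hb]; linarith [neg_le_truncate (n := n) (a := a)]
  have : (0 : EReal) ≤ ((truncate n a + truncate n b : ℝ) : EReal) := by
    rw [coe_add]
    exact h.trans (add_le_add (le_coe_truncate ha.le) (le_coe_truncate hb.le))
  exact_mod_cast this

theorem tendsto_coe_truncate : Tendsto (fun n ↦ (truncate n a : EReal)) atTop (𝓝 a) := by
  have hn : Tendsto (fun n : ℕ ↦ ((n : ℝ) : EReal)) atTop (𝓝 ⊤) :=
    tendsto_coe_nhds_top_iff.2 tendsto_natCast_atTop_atTop
  have hneg : Tendsto (fun n : ℕ ↦ ((-n : ℝ) : EReal)) atTop (𝓝 ⊥) :=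
    tendsto_coe_nhds_bot_iff.2 (tendsto_neg_atTop_atBot.comp tendsto_natCast_atTop_atTop)
  simp_rw [coe_truncate]
  simpa using (tendsto_const_nhds.min hn).max hneg

theorem ofReal_truncate_add_le {c : ℝ≥0∞} (h : a + b ≤ c) :
    ENNReal.ofReal (truncate n a + truncate n b) ≤ c := by
  rw [← real_coe_toENNReal, ← toENNReal_coe (x := c)]
  exact toENNReal_le_toENNReal (coe_truncate_add_le.trans (max_le h (coe_ennreal_nonneg c)))

theorem tendsto_ofReal_truncate_add {c : ℝ≥0∞} (h : a + b = c) :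
    Tendsto (fun n ↦ ENNReal.ofReal (truncate n a + truncate n b)) atTop (𝓝 c) := by
  have hab : a ≠ ⊥ ∧ b ≠ ⊥ := by
    rw [← not_or, ← add_eq_bot_iff, h]
    exact coe_ennreal_ne_bot c
  have hsum : Tendsto (fun n ↦ ((truncate n a + truncate n b : ℝ) : EReal)) atTop (𝓝 c) := by
    simp_rw [coe_add, ← h]
    exact (continuousAt_add (.inr hab.2) (.inl hab.1)).tendsto.comp
      (tendsto_coe_truncate.prodMk_nhds tendsto_coe_truncate)
  have := (continuous_toENNReal.tendsto _).comp hsum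
  rw [toENNReal_coe] at this
  exact this.congr fun n ↦ real_coe_toENNReal _

theorem measurable_truncate (n : ℕ) : Measurable (truncate n) :=
  ((measurable_id.min measurable_const).max measurable_const).ereal_toReal

end EReal

open EReal

theorem MeasureTheory.ofReal_integral_le_lintegral_ofReal {α : Type*} [MeasurableSpace α]
    {μ : Measure α} {f : α → ℝ} (hf : Integrable f μ) :
    ENNReal.ofReal (∫ x, f x ∂μ) ≤ ∫⁻ x, ENNReal.ofReal (f x) ∂μ :=
  calc ENNReal.ofReal (∫ x, f x ∂μ)
      ≤ ENNReal.ofReal (∫ x, max (f x) 0 ∂μ) :=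
        ENNReal.ofReal_le_ofReal (integral_mono hf hf.pos_part fun x ↦ le_max_left _ _)
    _ = ∫⁻ x, ENNReal.ofReal (max (f x) 0) ∂μ :=
        ofReal_integral_eq_lintegral_ofReal hf.pos_part (.of_forall fun x ↦ le_max_right _ _)
    _ = ∫⁻ x, ENNReal.ofReal (f x) ∂μ := lintegral_congr fun x ↦ by
        rw [ENNReal.ofReal_max, ENNReal.ofReal_zero, max_eq_left zero_le]

theorem Measurable.integrable_truncate {α : Type*} [MeasurableSpace α] {μ : Measure α}
    [IsFiniteMeasure μ] {f : α → EReal} (hf : Measurable f) (n : ℕ) :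
    Integrable (fun x ↦ truncate n (f x)) μ :=
  .of_bound ((measurable_truncate n).comp hf).aestronglyMeasurable n
    (.of_forall fun _ ↦ abs_truncate_le)

section Coupling

variable {X Y : Type*} [MeasurableSpace X] [MeasurableSpace Y] {μ : Measure X} {ν : Measure Y}
  {π : Measure (X × Y)} {f : X → ℝ} {g : Y → ℝ}

theorem IsCoupling.integrable_add (hπ : IsCoupling μ ν π) (hf : Integrable f μ)
    (hg : Integrable g ν) : Integrable (fun p ↦ f p.1 + g p.2) π := by
  obtain ⟨rfl, rfl⟩ := hπ
  exact (hf.comp_measurable measurable_fst).add (hg.comp_measurable measurable_snd)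

theorem IsCoupling.integral_add (hπ : IsCoupling μ ν π) (hf : Integrable f μ)
    (hg : Integrable g ν) : ∫ p, f p.1 + g p.2 ∂π = ∫ x, f x ∂μ + ∫ y, g y ∂ν := by
  obtain ⟨rfl, rfl⟩ := hπ
  have hf' : Integrable (fun p : X × Y ↦ f p.1) π := hf.comp_measurable measurable_fst
  have hg' : Integrable (fun p : X × Y ↦ g p.2) π := hg.comp_measurable measurable_snd
  rw [integral_add hf' hg',
    integral_map measurable_fst.aemeasurable hf.aestronglyMeasurable,
    integral_map measurable_snd.aemeasurable hg.aestronglyMeasurable]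

def truncatedDualValue (μ : Measure X) (ν : Measure Y) (φ : X → EReal) (ψ : Y → EReal) (n : ℕ) :
    ℝ :=
  ∫ x, truncate n (φ x) ∂μ + ∫ y, truncate n (ψ y) ∂ν

variable [IsFiniteMeasure μ] [IsFiniteMeasure ν] {c : X × Y → ℝ≥0∞} {φ : X → EReal}
  {ψ : Y → EReal}

theorem IsCoupling.truncatedDualValue_eq_integral (hπ : IsCoupling μ ν π) (hφ : Measurable φ)
    (hψ : Measurable ψ) (n : ℕ) :
    truncatedDualValue μ ν φ ψ n = ∫ p, truncate n (φ p.1) + truncate n (ψ p.2) ∂π :=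
  (hπ.integral_add (hφ.integrable_truncate n) (hψ.integrable_truncate n)).symm

theorem IsCoupling.ofReal_truncatedDualValue_le (hπ : IsCoupling μ ν π) (hφ : Measurable φ)
    (hψ : Measurable ψ) (hle : ∀ x y, φ x + ψ y ≤ c (x, y)) (n : ℕ) :
    ENNReal.ofReal (truncatedDualValue μ ν φ ψ n) ≤ ∫⁻ p, c p ∂π := by
  rw [hπ.truncatedDualValue_eq_integral hφ hψ]
  exact (ofReal_integral_le_lintegral_ofReal
    (hπ.integrable_add (hφ.integrable_truncate n) (hψ.integrable_truncate n))).trans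
    (lintegral_mono fun p ↦ ofReal_truncate_add_le (hle p.1 p.2))

theorem IsCoupling.lintegral_le_liminf_truncatedDualValue (hπ : IsCoupling μ ν π)
    (hφ : Measurable φ) (hψ : Measurable ψ) (heq : ∀ᵐ p ∂π, φ p.1 + ψ p.2 = c p) :
    ∫⁻ p, c p ∂π ≤ liminf (fun n ↦ ENNReal.ofReal (truncatedDualValue μ ν φ ψ n)) atTop := by
  have hdual : ∀ n, ENNReal.ofReal (truncatedDualValue μ ν φ ψ n)
      = ∫⁻ p, ENNReal.ofReal (truncate n (φ p.1) + truncate n (ψ p.2)) ∂π := fun n ↦ by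
    rw [hπ.truncatedDualValue_eq_integral hφ hψ, ofReal_integral_eq_lintegral_ofReal
      (hπ.integrable_add (hφ.integrable_truncate n) (hψ.integrable_truncate n))]
    filter_upwards [heq] with p hp using truncate_add_nonneg (hp ▸ coe_ennreal_nonneg _)
  simp_rw [hdual]
  calc ∫⁻ p, c p ∂π
      = ∫⁻ p, liminf (fun n ↦ ENNReal.ofReal (truncate n (φ p.1) + truncate n (ψ p.2))) atTop ∂π :=
        lintegral_congr_ae (heq.mono fun p hp ↦ (tendsto_ofReal_truncate_add hp).liminf_eq.symm)
    _ ≤ _ := lintegral_liminf_le fun n ↦ ENNReal.measurable_ofReal.comp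
        (((measurable_truncate n).comp (hφ.comp measurable_fst)).add
          ((measurable_truncate n).comp (hψ.comp measurable_snd)))

end Coupling

theorem stronglyCMonotone_implies_optimal
    {X Y : Type*} [MeasurableSpace X] [MeasurableSpace Y]
    (μ : Measure X) (ν : Measure Y) [IsProbabilityMeasure μ] [IsProbabilityMeasure ν]
    (c : X × Y → ℝ≥0∞)
    (π₀ : Measure (X × Y)) (hπ₀ : IsCoupling μ ν π₀)
    (φ : X → EReal) (ψ : Y → EReal) (hφ : Measurable φ) (hψ : Measurable ψ)
    (hle : ∀ x y, φ x + ψ y ≤ (c (x, y)).toEReal)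
    (heq : ∀ᵐ p ∂π₀, φ p.1 + ψ p.2 = (c p).toEReal) :
    ∀ π₁ : Measure (X × Y), IsCoupling μ ν π₁ →
      ∫⁻ p, c p ∂π₀ ≤ ∫⁻ p, c p ∂π₁ := fun _ hπ₁ ↦
  (hπ₀.lintegral_le_liminf_truncatedDualValue hφ hψ heq).trans <| liminf_le_of_frequently_le' <|
    .of_forall (hπ₁.ofReal_truncatedDualValue_le hφ hψ hle)
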